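/- arXiv:0908.2899 — 4 statements merged into one kernel-verified Lean document; each statement's English description precedes it below -/
import Mathlib

section
/- Let (α,S) be homotopy data, 𝒜 an α-alphabet, A,B,C distinct letters of 𝒜, and x,y,z,t words in 𝒜∖{A,B,C} such that xyzt is a Gauss word. If (|A|, τ(|B|), |C|) ∈ S, then the nanowords (𝒜, xAByCAzBCt) and (𝒜, xBAyACzCBt) are S-homotopic. -/
/-- A word over alphabet `β`: a list of occurrences `(n, b)` of letters with
name `n` and projection `b ∈ β`. -/
abbrev Word (β : Type) := List (ℕ × β)

/-- `w` is a nanoword: every occurring letter occurs exactly twice, and a letter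
name determines its projection. -/
def isNanoW {β : Type} [DecidableEq β] (w : Word β) : Prop :=
  ∀ p ∈ w, w.count p = 2 ∧ ∀ q ∈ w, q.1 = p.1 → q.2 = p.2

/-- The three `(Q,R,S)`-homotopy moves on words. -/
inductive WMove {β : Type} (Q : Set β) (R : Set (β × β)) (S : Set (β × β × β)) :
    Word β → Word β → Prop
  | m1 (x y : Word β) (n : ℕ) (a : β) (h : a ∈ Q) :
      WMove Q R S (x ++ [(n, a), (n, a)] ++ y) (x ++ y)
  | m2 (x y z : Word β) (n m : ℕ) (a b : β) (h : (a, b) ∈ R) :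
      WMove Q R S (x ++ [(n, a), (m, b)] ++ y ++ [(m, b), (n, a)] ++ z) (x ++ y ++ z)
  | m3 (x y z t : Word β) (n m p : ℕ) (a b c : β) (h : (a, b, c) ∈ S) :
      WMove Q R S
        (x ++ [(n, a), (m, b)] ++ y ++ [(n, a), (p, c)] ++ z ++ [(m, b), (p, c)] ++ t)
        (x ++ [(m, b), (n, a)] ++ y ++ [(p, c), (n, a)] ++ z ++ [(p, c), (m, b)] ++ t)

/-- Isomorphism of words: an injective renaming of letter names. -/
def WIso {β : Type} (w₁ w₂ : Word β) : Prop :=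
  ∃ f : Equiv.Perm ℕ, w₂ = w₁.map fun q => (f q.1, q.2)

/-- One step of `(Q,R,S)`-homotopy of words. -/
def WStep {β : Type} (Q : Set β) (R : Set (β × β)) (S : Set (β × β × β))
    (w₁ w₂ : Word β) : Prop :=
  WIso w₁ w₂ ∨ WMove Q R S w₁ w₂ ∨ WMove Q R S w₂ w₁

/-- `(Q,R,S)`-homotopy of words. -/
def WHomotopic {β : Type} (Q : Set β) (R : Set (β × β)) (S : Set (β × β × β)) :
    Word β → Word β → Prop :=
  Relation.ReflTransGen (WStep Q R S)

/-- Turaev's `S`-homotopy of nanowords: `(Q,R,S)`-homotopy with `Q = α`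
(unrestricted first move) and `R` the graph of the involution `τ`. -/
def SWHomotopic {α : Type} (τ : α → α) (S : Set (α × α × α)) :
    Word α → Word α → Prop :=
  WHomotopic Set.univ {p : α × α | p.2 = τ p.1} S

/-!
Insert a cancelling pair `E D ⋯ D E` with `|E| = |B|` and `|D| = τ |B|` around the word (second
move), braid `D` past `A` and `C` (third move, with `(|A|, |D|, |C|) = (|A|, τ |B|, |C|) ∈ S`), and
cancel `D` against `B` (second move, as `τ (τ |B|) = |B|`). What remains is the target word with
`E` in place of `B`; renaming `E` to `B` is an isomorphism.
-/

namespace WHomotopic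

variable {β : Type} {Q : Set β} {R : Set (β × β)} {S : Set (β × β × β)} {w₁ w₂ : Word β}

theorem of_move (h : WMove Q R S w₁ w₂) : WHomotopic Q R S w₁ w₂ :=
  .single (.inr (.inl h))

theorem of_move_symm (h : WMove Q R S w₂ w₁) : WHomotopic Q R S w₁ w₂ :=
  .single (.inr (.inr h))

theorem of_iso (h : WIso w₁ w₂) : WHomotopic Q R S w₁ w₂ :=
  .single (.inl h)

theorem trans {w₃ : Word β} (h₁ : WHomotopic Q R S w₁ w₂) (h₂ : WHomotopic Q R S w₂ w₃) :
    WHomotopic Q R S w₁ w₃ :=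
  Relation.ReflTransGen.trans h₁ h₂

theorem braid_via_cancelling_pair (x y z t : Word β) (nA nB nC nD nE : ℕ) (a b c d : β)
    (hbd : (b, d) ∈ R) (hdb : (d, b) ∈ R) (hS : (a, d, c) ∈ S) :
    WHomotopic Q R S
      (x ++ [(nA, a), (nB, b)] ++ y ++ [(nC, c), (nA, a)] ++ z ++ [(nB, b), (nC, c)] ++ t)
      (x ++ [(nE, b), (nA, a)] ++ y ++ [(nA, a), (nC, c)] ++ z ++ [(nC, c), (nE, b)] ++ t) := by
  have insert_pair := WMove.m2 (Q := Q) (S := S)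
    x ([(nA, a), (nB, b)] ++ y ++ [(nC, c), (nA, a)] ++ z ++ [(nB, b), (nC, c)]) t
    nE nD b d hbd
  have braid := WMove.m3 (Q := Q) (R := R)
    (x ++ [(nE, b)]) ([(nB, b)] ++ y) (z ++ [(nB, b)]) ([(nE, b)] ++ t) nA nD nC a d c hS
  have cancel_pair := WMove.m2 (Q := Q) (S := S)
    (x ++ [(nE, b), (nA, a)]) (y ++ [(nA, a), (nC, c)] ++ z) ([(nC, c), (nE, b)] ++ t)
    nD nB d b hdb
  simp only [List.append_assoc, List.cons_append, List.nil_append] at *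
  exact (of_move_symm insert_pair).trans ((of_move_symm braid).trans (of_move cancel_pair))

end WHomotopic

theorem List.map_swap_fst_eq_self {β : Type} {n m : ℕ} {w : Word β}
    (h : ∀ q ∈ w, q.1 ≠ n ∧ q.1 ≠ m) :
    w.map (fun q => (Equiv.swap n m q.1, q.2)) = w :=
  (List.map_congr_left fun q hq => by
    rw [Equiv.swap_apply_of_ne_of_ne (h q hq).1 (h q hq).2]).trans w.map_id'

theorem WIso.rename {β : Type} (x y z t : Word β) (nA nB nC nE : ℕ) (a b c : β)
    (hx : ∀ q ∈ x ++ y ++ z ++ t, q.1 ≠ nE ∧ q.1 ≠ nB)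
    (hA : nA ≠ nE ∧ nA ≠ nB) (hC : nC ≠ nE ∧ nC ≠ nB) :
    WIso (x ++ [(nE, b), (nA, a)] ++ y ++ [(nA, a), (nC, c)] ++ z ++ [(nC, c), (nE, b)] ++ t)
      (x ++ [(nB, b), (nA, a)] ++ y ++ [(nA, a), (nC, c)] ++ z ++ [(nC, c), (nB, b)] ++ t) := by
  refine ⟨Equiv.swap nE nB, ?_⟩
  simp only [List.mem_append] at hx
  simp only [List.map_append, List.map_cons, List.map_nil, Equiv.swap_apply_left,
    Equiv.swap_apply_of_ne_of_ne hA.1 hA.2, Equiv.swap_apply_of_ne_of_ne hC.1 hC.2,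
    List.map_swap_fst_eq_self fun q hq => hx q (.inl (.inl (.inl hq))),
    List.map_swap_fst_eq_self fun q hq => hx q (.inl (.inl (.inr hq))),
    List.map_swap_fst_eq_self fun q hq => hx q (.inl (.inr hq)),
    List.map_swap_fst_eq_self fun q hq => hx q (.inr hq)]

theorem stmt3_general {α : Type} (τ : α → α) (hτ : Function.Involutive τ)
    (S : Set (α × α × α)) (x y z t : Word α) (nA nB nC : ℕ) (a b c : α)
    (hAB : nA ≠ nB) (hBC : nB ≠ nC)
    (hS : (a, τ b, c) ∈ S)
    (hout : ∀ q ∈ x ++ y ++ z ++ t, q.1 ≠ nA ∧ q.1 ≠ nB ∧ q.1 ≠ nC) :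
    SWHomotopic τ S
      (x ++ [(nA, a), (nB, b)] ++ y ++ [(nC, c), (nA, a)] ++ z ++
        [(nB, b), (nC, c)] ++ t)
      (x ++ [(nB, b), (nA, a)] ++ y ++ [(nA, a), (nC, c)] ++ z ++
        [(nC, c), (nB, b)] ++ t) := by
  -- Both new names are fresh, so that every intermediate word is again a nanoword.
  let names : Finset ℕ :=
    insert nA (insert nB (insert nC ((x ++ y ++ z ++ t).map Prod.fst).toFinset))
  obtain ⟨nE, hE⟩ := Infinite.exists_notMem_finset names
  obtain ⟨nD, -⟩ := Infinite.exists_notMem_finset (insert nE names)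
  simp only [names, Finset.mem_insert, List.mem_toFinset, List.mem_map, not_or] at hE
  have hfresh : ∀ q ∈ x ++ y ++ z ++ t, q.1 ≠ nE ∧ q.1 ≠ nB := fun q hq =>
    ⟨fun h => hE.2.2.2 ⟨q, hq, h⟩, (hout q hq).2.1⟩
  have hbτb : (b, τ b) ∈ {p : α × α | p.2 = τ p.1} := rfl
  have hτbb : (τ b, b) ∈ {p : α × α | p.2 = τ p.1} := (hτ b).symm
  exact (WHomotopic.braid_via_cancelling_pair x y z t nA nB nC nD nE a b c (τ b) hbτb hτbb
    hS).trans (.of_iso (WIso.rename x y z t nA nB nC nE a b c hfresh ⟨Ne.symm hE.1, hAB⟩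
      ⟨Ne.symm hE.2.2.1, hBC.symm⟩))

/-- Lemma (i): if `(|A|, τ(|B|), |C|) ∈ S` then the nanowords
`xAByCAzBCt` and `xBAyACzCBt` are `S`-homotopic, for distinct letters `A,B,C`
and words `x,y,z,t` in `𝒜∖{A,B,C}` with `xyzt` a Gauss word. -/
theorem stmt3 {α : Type} [DecidableEq α] (τ : α → α) (hτ : Function.Involutive τ)
    (S : Set (α × α × α)) (x y z t : Word α) (nA nB nC : ℕ) (a b c : α)
    (hAB : nA ≠ nB) (hAC : nA ≠ nC) (hBC : nB ≠ nC)
    (hS : (a, τ b, c) ∈ S)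
    (hout : ∀ q ∈ x ++ y ++ z ++ t, q.1 ≠ nA ∧ q.1 ≠ nB ∧ q.1 ≠ nC)
    (hGauss : isNanoW (x ++ y ++ z ++ t)) :
    SWHomotopic τ S
      (x ++ [(nA, a), (nB, b)] ++ y ++ [(nC, c), (nA, a)] ++ z ++
        [(nB, b), (nC, c)] ++ t)
      (x ++ [(nB, b), (nA, a)] ++ y ++ [(nA, a), (nC, c)] ++ z ++
        [(nC, c), (nB, b)] ++ t) :=
  stmt3_general τ hτ S x y z t nA nB nC a b c hAB hBC hS hout
end

section
/- The component length vector w̃ is a (Q_{α,k}, R_{α,k}, S_{α,k})-homotopy invariant of nanowords over α_k: if two nanowords over α_k are (Q_{α,k},R_{α,k},S_{α,k})-homotopic then their component length vectors are equal. -/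
/-- `Q_{α,k} = {a_{ii}}`. -/
def Qk (α : Type) : Set (α × ℕ × ℕ) := {p | p.2.1 = p.2.2}

/-- `R_{α,k} = {(a_{ij}, τ(a)_{ij})}`. -/
def Rk {α : Type} (τ : α → α) : Set ((α × ℕ × ℕ) × (α × ℕ × ℕ)) :=
  {pr | pr.2 = (τ pr.1.1, pr.1.2)}

/-- `S_{α,k} = {(a_{ij}, b_{il}, c_{jl}) : (a,b,c) ∈ S, 1 ≤ i ≤ j ≤ l ≤ k}`. -/
def Sk {α : Type} (S : Set (α × α × α)) (k : ℕ) :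
    Set ((α × ℕ × ℕ) × (α × ℕ × ℕ) × (α × ℕ × ℕ)) :=
  {tr | ∃ a b c i j l, (a, b, c) ∈ S ∧ 1 ≤ i ∧ i ≤ j ∧ j ≤ l ∧ l ≤ k ∧
    tr = ((a, i, j), (b, i, l), (c, j, l))}

/-- `Card(𝒜_{ij})` as an element of `ℤ/2ℤ`: the number of letters of `w` whose
projection has subscripts `(i,j)` (each letter occurs as two identical entries,
so `w.dedup` lists the letters once). -/
def cardA {α : Type} [DecidableEq α] (w : Word (α × ℕ × ℕ)) (i j : ℕ) : ZMod 2 :=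
  ((w.dedup.filter fun q => q.2.2.1 = i ∧ q.2.2.2 = j).length : ZMod 2)

/-- The `l`-th entry of the component length vector:
`w̃(l) = Σ_{i<l} Card(𝒜_{il}) + Σ_{l<i} Card(𝒜_{li})  (mod 2)`. -/
def wcl {α : Type} [DecidableEq α] (w : Word (α × ℕ × ℕ)) (k l : ℕ) : ZMod 2 :=
  ∑ i ∈ Finset.Icc 1 k,
    ((if i < l then cardA w i l else 0) + (if l < i then cardA w l i else 0))

/-- A nanoword over `α_k`: projections `a_{ij}` satisfy `1 ≤ i ≤ j ≤ k`. -/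
def isNanoWk {α : Type} [DecidableEq α] (k : ℕ) (w : Word (α × ℕ × ℕ)) : Prop :=
  isNanoW w ∧ ∀ q ∈ w, 1 ≤ q.2.2.1 ∧ q.2.2.1 ≤ q.2.2.2 ∧ q.2.2.2 ≤ k

/-
For `i ≠ j`, count the occurrences of letters with subscripts `(i,j)` in a word. The first
move never deletes such occurrences (it only deletes letters `a_{ii}`), the second deletes
either none or four of them (both letters carry the same subscripts), and the third move
only permutes the word. So this count is a homotopy invariant modulo 4. In a nanoword it
is twice `Card(𝒜_{ij})`, hence `Card(𝒜_{ij})` is invariant modulo 2 for `i ≠ j`, and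
`w̃(l)` involves only such cardinalities.
-/

section Occurrences

variable {β : Type} (P : β → Prop) [DecidablePred P]

def occCount (w : Word β) : ℕ := w.countP fun q => P q.2

variable {P}

@[simp]
theorem occCount_append (u v : Word β) : occCount P (u ++ v) = occCount P u + occCount P v :=
  List.countP_append

@[simp]
theorem occCount_cons (q : ℕ × β) (w : Word β) :
    occCount P (q :: w) = occCount P w + if P q.2 then 1 else 0 := by
  simp [occCount, List.countP_cons]

@[simp]
theorem occCount_nil : occCount P ([] : Word β) = 0 := rfl

theorem WIso.occCount_eq {w₁ w₂ : Word β} (h : WIso w₁ w₂) : occCount P w₁ = occCount P w₂ := by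
  obtain ⟨f, rfl⟩ := h
  simp only [occCount, List.countP_map]
  rfl

variable {Q : Set β} {R : Set (β × β)} {S : Set (β × β × β)}

theorem WMove.occCount_modEq (hQ : ∀ a ∈ Q, ¬ P a) (hR : ∀ p ∈ R, (P p.1 ↔ P p.2))
    {u v : Word β} (h : WMove Q R S u v) : occCount P u ≡ occCount P v [MOD 4] := by
  cases h with
  | m1 x y n a ha => simp [hQ a ha, Nat.ModEq.refl]
  | m2 x y z n m a b hab =>
    by_cases hPa : P a
    · have hPb : P b := (hR _ hab).1 hPa
      simp only [occCount_append, occCount_cons, occCount_nil, hPa, hPb, if_true, Nat.ModEq]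
      omega
    · have hPb : ¬ P b := fun hPb => hPa ((hR _ hab).2 hPb)
      simp [hPa, hPb, Nat.ModEq.refl]
  | m3 => simp only [occCount_append, occCount_cons, Nat.ModEq]; omega

theorem WHomotopic.occCount_modEq (hQ : ∀ a ∈ Q, ¬ P a) (hR : ∀ p ∈ R, (P p.1 ↔ P p.2))
    {w₁ w₂ : Word β} (h : WHomotopic Q R S w₁ w₂) : occCount P w₁ ≡ occCount P w₂ [MOD 4] := by
  induction h with
  | refl => rfl
  | tail _ hstep ih =>
    refine ih.trans ?_
    rcases hstep with hiso | hmove | hmove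
    · exact congrArg (· % 4) hiso.occCount_eq
    · exact hmove.occCount_modEq hQ hR
    · exact (hmove.occCount_modEq hQ hR).symm

end Occurrences

theorem List.countP_eq_two_mul_countP_dedup {γ : Type} [DecidableEq γ] {l : List γ}
    (hl : ∀ x ∈ l, l.count x = 2) (p : γ → Bool) : l.countP p = 2 * l.dedup.countP p := by
  rw [← List.sum_map_count_dedup_filter_eq_countP, List.sum_eq_card_nsmul _ 2,
    List.length_map, List.countP_eq_length_filter, smul_eq_mul, mul_comm]
  simp only [List.mem_map, List.mem_filter, List.mem_dedup]
  rintro _ ⟨x, ⟨hx, -⟩, rfl⟩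
  exact hl x hx

theorem isNanoW.occCount_eq {β : Type} [DecidableEq β] {w : Word β} (hw : isNanoW w)
    (P : β → Prop) [DecidablePred P] : occCount P w = 2 * w.dedup.countP fun q => P q.2 :=
  -- `isNanoW` counts with the `BEq` instance of the product, not `instBEqOfDecidableEq`.
  List.countP_eq_two_mul_countP_dedup (fun x hx => by convert (hw x hx).1) _

theorem cardA_eq_of_homotopic {α : Type} [DecidableEq α] {τ : α → α} {S : Set (α × α × α)}
    {k : ℕ} {w₁ w₂ : Word (α × ℕ × ℕ)} (h₁ : isNanoW w₁) (h₂ : isNanoW w₂)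
    (h : WHomotopic (Qk α) (Rk τ) (Sk S k) w₁ w₂) {i j : ℕ} (hij : i ≠ j) :
    cardA w₁ i j = cardA w₂ i j := by
  let P : α × ℕ × ℕ → Prop := fun a => a.2.1 = i ∧ a.2.2 = j
  have hQ : ∀ a ∈ Qk α, ¬ P a := fun a (ha : a.2.1 = a.2.2) ⟨hi, hj⟩ => hij (hi ▸ hj ▸ ha)
  have hR : ∀ p ∈ Rk τ, (P p.1 ↔ P p.2) := fun p (hp : p.2 = _) => by simp [P, hp]
  have hocc := h.occCount_modEq hQ hR
  rw [h₁.occCount_eq, h₂.occCount_eq] at hocc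
  have hmod := Nat.ModEq.mul_left_cancel' (c := 2) (m := 2) two_ne_zero hocc
  simpa [cardA, P, List.countP_eq_length_filter, ZMod.natCast_eq_natCast_iff] using hmod

theorem stmt11_general {α : Type} [DecidableEq α] (τ : α → α)
    (S : Set (α × α × α)) (k : ℕ) (w₁ w₂ : Word (α × ℕ × ℕ))
    (h₁ : isNanoWk k w₁) (h₂ : isNanoWk k w₂)
    (h : WHomotopic (Qk α) (Rk τ) (Sk S k) w₁ w₂) :
    ∀ l : ℕ, wcl w₁ k l = wcl w₂ k l := by
  have hcard {i j : ℕ} (hij : i ≠ j) : cardA w₁ i j = cardA w₂ i j :=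
    cardA_eq_of_homotopic h₁.1 h₂.1 h hij
  intro l
  refine Finset.sum_congr rfl fun i _ => ?_
  congr 1
  · split_ifs with hil
    exacts [hcard hil.ne, rfl]
  · split_ifs with hli
    exacts [hcard hli.ne, rfl]

/-- the component length vector `w̃` is a
`(Q_{α,k},R_{α,k},S_{α,k})`-homotopy invariant of nanowords over `α_k`. -/
theorem stmt11 {α : Type} [DecidableEq α] (τ : α → α) (hτ : Function.Involutive τ)
    (S : Set (α × α × α)) (k : ℕ) (w₁ w₂ : Word (α × ℕ × ℕ))
    (h₁ : isNanoWk k w₁) (h₂ : isNanoWk k w₂)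
    (h : WHomotopic (Qk α) (Rk τ) (Sk S k) w₁ w₂) :
    ∀ l : ℕ, wcl w₁ k l = wcl w₂ k l :=
  stmt11_general τ S k w₁ w₂ h₁ h₂ h
end

section
/- For a nanophrase P over α and letters A,B with |B| = τ(|A|) arranged as xAByBAz, and any letter D ∉ {A,B} whose orbit under τ is free (τ(|D|) ≠ |D|), if the orbit of |A| is also free, then σ_P^j(D,A) = −σ_P^j(D,B), hence σ_P^j(D,A) + σ_P^j(D,B) = 0. -/
/-- A phrase over alphabet `α`: a flattened list of entries where `none` is the
component separator `|` and `some (n, a)` is an occurrence of the letter with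
name `n` and projection `a ∈ α`. -/
abbrev Phrase (α : Type) := List (Option (ℕ × α))

/-- `P` is a nanophrase: every occurring letter occurs exactly twice, and a
letter name determines its projection. -/
def isNanoP {α : Type} [DecidableEq α] (P : Phrase α) : Prop :=
  ∀ p ∈ P.reduceOption, P.reduceOption.count p = 2 ∧
    ∀ q ∈ P.reduceOption, q.1 = p.1 → q.2 = p.2

/-- The three `(Q,R,S)`-homotopy moves on phrases. -/
inductive PMove {α : Type} (Q : Set α) (R : Set (α × α)) (S : Set (α × α × α)) :
    Phrase α → Phrase α → Prop
  | m1 (x y : Phrase α) (n : ℕ) (a : α) (h : a ∈ Q) :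
      PMove Q R S (x ++ [some (n, a), some (n, a)] ++ y) (x ++ y)
  | m2 (x y z : Phrase α) (n m : ℕ) (a b : α) (h : (a, b) ∈ R) :
      PMove Q R S
        (x ++ [some (n, a), some (m, b)] ++ y ++ [some (m, b), some (n, a)] ++ z)
        (x ++ y ++ z)
  | m3 (x y z t : Phrase α) (n m p : ℕ) (a b c : α) (h : (a, b, c) ∈ S) :
      PMove Q R S
        (x ++ [some (n, a), some (m, b)] ++ y ++ [some (n, a), some (p, c)] ++ z ++
          [some (m, b), some (p, c)] ++ t)
        (x ++ [some (m, b), some (n, a)] ++ y ++ [some (p, c), some (n, a)] ++ z ++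
          [some (p, c), some (m, b)] ++ t)

/-- Isomorphism of phrases: an injective renaming of letter names preserving
projections and the phrase structure. -/
def PIso {α : Type} (P₁ P₂ : Phrase α) : Prop :=
  ∃ f : Equiv.Perm ℕ, P₂ = P₁.map (Option.map fun q => (f q.1, q.2))

/-- One step of `(Q,R,S)`-homotopy: an isomorphism, a move, or an inverse move. -/
def PStep {α : Type} (Q : Set α) (R : Set (α × α)) (S : Set (α × α × α))
    (P₁ P₂ : Phrase α) : Prop :=
  PIso P₁ P₂ ∨ PMove Q R S P₁ P₂ ∨ PMove Q R S P₂ P₁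

/-- `(Q,R,S)`-homotopy of phrases. -/
def PHomotopic {α : Type} (Q : Set α) (R : Set (α × α)) (S : Set (α × α × α)) :
    Phrase α → Phrase α → Prop :=
  Relation.ReflTransGen (PStep Q R S)

/-- The number of components (length) of a phrase. -/
def compCount {α : Type} (P : Phrase α) : ℕ := (P.filter fun o => o.isNone).length + 1

/-- The data of a complete representative system for the orbits of the
involution `τ`: orbits are indexed by `1,…,l+m`, the first `l` being free
(size 2) and the last `m` fixed points; `rep q` is the chosen representative of
the `q`-th orbit and `orb a` is the index of the orbit of `a`. -/
def IsCRS {α : Type} (τ : α → α) (l m : ℕ) (rep : ℕ → α) (orb : α → ℕ) : Prop :=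
  Function.Involutive τ ∧
  (∀ a : α, 1 ≤ orb a ∧ orb a ≤ l + m) ∧
  (∀ a : α, a = rep (orb a) ∨ a = τ (rep (orb a))) ∧
  (∀ q : ℕ, 1 ≤ q → q ≤ l + m → orb (rep q) = q) ∧
  (∀ q : ℕ, 1 ≤ q → q ≤ l + m → (q ≤ l ↔ τ (rep q) ≠ rep q)) ∧
  (∀ a : α, orb (τ a) = orb a)

/-- The subgroup of `∏_{(p,q)} ℤ` by which one quotients to obtain the mixed
group `∏ K_{(p,q)}` with `K_{(p,q)} = ℤ` if `p,q ≤ l` and `ℤ/2ℤ` otherwise. -/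
def Ksub (l : ℕ) : AddSubgroup ((ℕ × ℕ) → ℤ) where
  carrier := {f | ∀ pq : ℕ × ℕ,
    (pq.1 ≤ l ∧ pq.2 ≤ l → f pq = 0) ∧ (¬(pq.1 ≤ l ∧ pq.2 ≤ l) → (2 : ℤ) ∣ f pq)}
  zero_mem' := fun pq => ⟨fun _ => rfl, fun _ => dvd_zero 2⟩
  add_mem' := by
    intro f g hf hg pq
    refine ⟨fun h => ?_, fun h => ?_⟩
    · show f pq + g pq = 0
      rw [(hf pq).1 h, (hg pq).1 h, add_zero]
    · exact dvd_add ((hf pq).2 h) ((hg pq).2 h)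
  neg_mem' := by
    intro f hf pq
    refine ⟨fun h => ?_, fun h => ?_⟩
    · show -f pq = 0
      rw [(hf pq).1 h, neg_zero]
    · exact dvd_neg.mpr ((hf pq).2 h)

/-- The group `∏ K_{(p,q)}`, `K_{(p,q)} = ℤ` if `p,q ≤ l`, else `ℤ/2ℤ`. -/
def KG (l : ℕ) := ((ℕ × ℕ) → ℤ) ⧸ Ksub l

instance (l : ℕ) : AddCommGroup (KG l) := QuotientAddGroup.Quotient.addCommGroup _

/-- The canonical projection onto `∏ K_{(p,q)}`. -/
def kmk (l : ℕ) : ((ℕ × ℕ) → ℤ) → KG l := QuotientAddGroup.mk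

/-- The basis vector `e_{(p,q)}`. -/
def ehat (p q : ℕ) : (ℕ × ℕ) → ℤ := fun pq => if pq = (p, q) then 1 else 0

/-- The coordinate of `v ∈ ∏ K_{(p,q)}` at `pq` is zero (as an element of `ℤ`
if `pq` is a free-free pair, of `ℤ/2ℤ` otherwise). -/
def ZeroCoord (l : ℕ) (v : KG l) (pq : ℕ × ℕ) : Prop :=
  ∀ f : (ℕ × ℕ) → ℤ, kmk l f = v →
    ((pq.1 ≤ l ∧ pq.2 ≤ l → f pq = 0) ∧ (¬(pq.1 ≤ l ∧ pq.2 ≤ l) → (2 : ℤ) ∣ f pq))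

/-- `v` is of type (i): its coordinates `(r,s)` with `r > l` all vanish. -/
def TypeI (l : ℕ) (v : ℕ → KG l) : Prop :=
  ∀ (j r s : ℕ), l < r → ZeroCoord l (v j) (r, s)

/-- `v` is of type (ii): its coordinates `(r,s)` with `r ≤ l` all vanish. -/
def TypeII (l : ℕ) (v : ℕ → KG l) : Prop :=
  ∀ (j r s : ℕ), r ≤ l → ZeroCoord l (v j) (r, s)

/-- `ε(a) = +1` if `a` is a chosen representative, `−1` otherwise. -/
def eps {α : Type} [DecidableEq α] (rep : ℕ → α) (orb : α → ℕ) (a : α) : ℤ :=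
  if a = rep (orb a) then 1 else -1

/-- Flatten a phrase, recording for each occurrence its letter name, projection,
and the (1-based) index of the component in which it occurs. -/
def flat {α : Type} : Phrase α → ℕ → List (ℕ × α × ℕ)
  | [], _ => []
  | Option.none :: P, i => flat P (i + 1)
  | Option.some q :: P, i => (q.1, q.2, i) :: flat P i

/-- The positions (0-based, in the flattening of `P`) of the occurrences of the
letter named `n`. -/
def posL {α : Type} (P : Phrase α) (n : ℕ) : List ℕ :=
  ((((flat P 1).zipIdx.map Prod.swap).filter fun iq => iq.2.1 = n).map Prod.fst)

/-- Position of the first occurrence of the letter named `n`. -/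
def pos1 {α : Type} (P : Phrase α) (n : ℕ) : ℕ := (posL P n).headI

/-- Position of the second occurrence of the letter named `n`. -/
def pos2 {α : Type} (P : Phrase α) (n : ℕ) : ℕ := (posL P n).getLast!

/-- The projection in `α` of the letter named `n`. -/
def projP {α : Type} [Inhabited α] (P : Phrase α) (n : ℕ) : α :=
  (((flat P 1).filter fun q => q.1 = n).headI).2.1

/-- The component containing the first occurrence of the letter named `n`. -/
def comp1 {α : Type} [Inhabited α] (P : Phrase α) (n : ℕ) : ℕ :=
  ((((flat P 1).filter fun q => q.1 = n).map fun q => q.2.2)).headI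

/-- The component containing the second occurrence of the letter named `n`. -/
def comp2 {α : Type} [Inhabited α] (P : Phrase α) (n : ℕ) : ℕ :=
  ((((flat P 1).filter fun q => q.1 = n).map fun q => q.2.2)).getLast!

/-- Fukunaga's `σ_P^j(A,B)` (a lift to `∏ ℤ`; its class in `∏ K_{(p,q)}` is the
actual value): `± e_{(p,q)}` according to the interlacement pattern of `A,B`,
the component of the relevant occurrence of `B`, and whether `|B|` is a chosen
representative; `0` if `A` and `B` are not interlaced. -/
def sigmaHat {α : Type} [DecidableEq α] [Inhabited α] (rep : ℕ → α) (orb : α → ℕ)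
    (P : Phrase α) (j : ℕ) (nA nB : ℕ) : (ℕ × ℕ) → ℤ :=
  if pos1 P nA < pos1 P nB ∧ pos1 P nB < pos2 P nA ∧ pos2 P nA < pos2 P nB ∧
      comp2 P nB = j then
    eps rep orb (projP P nB) • ehat (orb (projP P nA)) (orb (projP P nB))
  else if pos1 P nB < pos1 P nA ∧ pos1 P nA < pos2 P nB ∧ pos2 P nB < pos2 P nA ∧
      comp1 P nB = j then
    (-eps rep orb (projP P nB)) • ehat (orb (projP P nA)) (orb (projP P nB))
  else 0

/-- The list of letter names occurring in `P`. -/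
def lettersP {α : Type} (P : Phrase α) : List ℕ :=
  ((P.reduceOption.map Prod.fst)).dedup

/-- The list `𝒜_j` of letter names occurring in the `j`-th component of `P`. -/
def compLetters {α : Type} (P : Phrase α) (j : ℕ) : List ℕ :=
  ((((flat P 1).filter fun q => q.2.2 = j).map fun q => q.1)).dedup

/-- A lift of `l_{P,j}(A) = Σ_{X ∈ 𝒜} σ_P^j(A,X)`. -/
def lHat {α : Type} [DecidableEq α] [Inhabited α] (rep : ℕ → α) (orb : α → ℕ)
    (P : Phrase α) (nA : ℕ) (j : ℕ) : (ℕ × ℕ) → ℤ :=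
  ((lettersP P).map fun nX => sigmaHat rep orb P j nA nX).sum

/-- `l_P(A) ∈ (∏ K_{(p,q)})^k`, as a function of the component index `j`. -/
def lP {α : Type} [DecidableEq α] [Inhabited α] (l : ℕ) (rep : ℕ → α) (orb : α → ℕ)
    (P : Phrase α) (nA : ℕ) : ℕ → KG l :=
  fun j => kmk l (lHat rep orb P nA j)

open Classical in
/-- The type (i) (`ℤ`-valued) part of `(B_P)_j`:
`(B_P)_j(v) = Σ_{A ∈ 𝒜_j, l_P(A) = v} ε(A)` if `v` is of type (i), else `0`. -/
noncomputable def B1 {α : Type} [DecidableEq α] [Inhabited α] (l : ℕ)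
    (rep : ℕ → α) (orb : α → ℕ) (P : Phrase α) (j : ℕ) (v : ℕ → KG l) : ℤ :=
  if TypeI l v then
    (((compLetters P j).filter fun nA => lP l rep orb P nA = v).map fun nA =>
      eps rep orb (projP P nA)).sum
  else 0

open Classical in
/-- The type (ii) (`ℤ/2ℤ`-valued) part of `(B_P)_j`:
`(B_P)_j(v) = Σ_{A ∈ 𝒜_j, l_P(A) = v} ε(A) mod 2` if `v` is of type (ii), else `0`. -/
noncomputable def B2 {α : Type} [DecidableEq α] [Inhabited α] (l : ℕ)
    (rep : ℕ → α) (orb : α → ℕ) (P : Phrase α) (j : ℕ) (v : ℕ → KG l) : ZMod 2 :=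
  if TypeII l v then
    ((((compLetters P j).filter fun nA => lP l rep orb P nA = v).map fun nA =>
      eps rep orb (projP P nA)).sum : ZMod 2)
  else 0

/-- Equality of the invariants `S_o` of two nanophrases: the maps `(B_P)_j`
agree (on nonzero vectors, where they are defined). -/
def SoEq {α : Type} [DecidableEq α] [Inhabited α] (l : ℕ) (rep : ℕ → α)
    (orb : α → ℕ) (P₁ P₂ : Phrase α) : Prop :=
  ∀ (j : ℕ) (v : ℕ → KG l), v ≠ 0 →
    B1 l rep orb P₁ j v = B1 l rep orb P₂ j v ∧
    B2 l rep orb P₁ j v = B2 l rep orb P₂ j v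

/-!
In `P = xAByBAz` the two occurrences of `B` sit immediately inside those of `A`, so the
occurrences of any third letter `D` avoid all four positions and `D` interlaces `A` in a given
pattern exactly when it interlaces `B` in the same pattern; moreover the relevant occurrences of
`A` and `B` lie in the same component. Since `|B| = τ |A|` lies in the same free orbit as `|A|`,
the two contributions carry the same basis vector `e_{(p,q)}` with opposite signs `ε(τ a) = -ε(a)`,
so they cancel already in `∏ ℤ`.
-/

namespace List

theorem headI_mem_of_ne_nil {β : Type*} [Inhabited β] {L : List β} (h : L ≠ []) :
    L.headI ∈ L := by
  cases L with
  | nil => exact absurd rfl h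
  | cons b L => exact mem_cons_self

theorem getLast!_mem_of_ne_nil {β : Type*} [Inhabited β] {L : List β} (h : L ≠ []) :
    L.getLast! ∈ L := by
  rw [getLast!_eq_getLast?_getD, getLast?_eq_some_getLast h]
  exact getLast_mem h

section Pair

variable {β : Type*} {p : β → Bool} {L₁ L₂ L₃ : List β} {e₁ e₂ : β}

theorem filter_eq_pair (h₁ : p e₁) (h₂ : p e₂) (hL : ∀ r ∈ L₁ ++ L₂ ++ L₃, ¬p r) :
    (L₁ ++ e₁ :: L₂ ++ e₂ :: L₃).filter p = [e₁, e₂] := by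
  simp only [mem_append, or_imp, forall_and] at hL
  simp [h₁, h₂, filter_eq_nil_iff.mpr hL.1.1, filter_eq_nil_iff.mpr hL.1.2,
    filter_eq_nil_iff.mpr hL.2]

theorem findIdxs_eq_pair (h₁ : p e₁) (h₂ : p e₂) (hL : ∀ r ∈ L₁ ++ L₂ ++ L₃, ¬p r) :
    (L₁ ++ e₁ :: L₂ ++ e₂ :: L₃).findIdxs p = [L₁.length, L₁.length + L₂.length + 1] := by
  simp only [mem_append, or_imp, forall_and] at hL
  have h₀ : ∀ (L : List β) (s : ℕ), (∀ r ∈ L, ¬p r) → L.findIdxs p s = [] := fun L s h =>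
    findIdxs_eq_nil_iff.mpr fun r hr => by simpa using h r hr
  simp [h₁, h₂, h₀ _ _ hL.1.1, h₀ _ _ hL.1.2, h₀ _ _ hL.2]
  omega

end Pair

end List

section Flat

variable {α : Type}

theorem flat_append (u v : Phrase α) (i : ℕ) :
    flat (u ++ v) i = flat u i ++ flat v (i + u.countP Option.isNone) := by
  induction u generalizing i with
  | nil => simp [flat]
  | cons o u ih =>
    cases o with
    | none =>
      simp [flat, ih, Nat.add_assoc, Nat.add_comm 1]
    | some q => simp [flat, ih]

theorem map_flat_eq_reduceOption (P : Phrase α) (i : ℕ) :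
    (flat P i).map (fun r => (r.1, r.2.1)) = P.reduceOption := by
  induction P generalizing i with
  | nil => rfl
  | cons o P ih =>
    cases o with
    | none => simpa [flat] using ih (i + 1)
    | some q => simp [flat, ih]

theorem flat_nested (x y z : Phrase α) (n n' : ℕ) (a a' : α) :
    ∃ i₁ i₂,
      flat (x ++ [some (n, a), some (n', a')] ++ y ++ [some (n', a'), some (n, a)] ++ z) 1 =
        flat x 1 ++ (n, a, i₁) :: (n', a', i₁) :: flat y i₁ ++
          (n', a', i₂) :: (n, a, i₂) :: flat z i₂ :=
  ⟨1 + x.countP Option.isNone, 1 + x.countP Option.isNone + y.countP Option.isNone,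
    by simp [flat_append, flat]⟩

theorem posL_eq_findIdxs (P : Phrase α) (n : ℕ) :
    posL P n = (flat P 1).findIdxs (fun r => r.1 = n) := by
  suffices ∀ (L : List (ℕ × α × ℕ)) s, (((L.zipIdx s).map Prod.swap).filter
      fun iq => iq.2.1 = n).map Prod.fst = L.findIdxs (fun r => r.1 = n) s from this _ 0
  intro L
  induction L with
  | nil => simp
  | cons r L ih => intro s; by_cases h : r.1 = n <;> simp [h, ih]

theorem not_mem_posL_of_ne {P : Phrase α} {n n' i : ℕ} (h : n ≠ n') (hi : i ∈ posL P n) :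
    i ∉ posL P n' := by
  simp only [posL_eq_findIdxs, List.mem_findIdxs_iff_exists_getElem_pos,
    decide_eq_true_eq] at hi ⊢
  rintro ⟨_, rfl⟩
  exact h hi.2.symm

theorem posL_ne_nil_of_mem_lettersP {P : Phrase α} {n : ℕ} (h : n ∈ lettersP P) :
    posL P n ≠ [] := by
  rw [lettersP, List.mem_dedup, ← map_flat_eq_reduceOption P 1, List.map_map] at h
  obtain ⟨r, hr, rfl⟩ := List.mem_map.mp h
  rw [posL_eq_findIdxs, Ne, List.findIdxs_eq_nil_iff]
  exact fun h' => by simpa using h' r hr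

theorem fst_ne_of_isNanoP [DecidableEq α] {P : Phrase α} (hP : isNanoP P)
    {L₁ L₂ L₃ : List (ℕ × α × ℕ)} {e₁ e₂ : ℕ × α × ℕ}
    (hF : flat P 1 = L₁ ++ e₁ :: L₂ ++ e₂ :: L₃) (he : e₂.1 = e₁.1 ∧ e₂.2.1 = e₁.2.1) :
    ∀ r ∈ L₁ ++ L₂ ++ L₃, r.1 ≠ e₁.1 := by
  set f : ℕ × α × ℕ → ℕ × α := fun r => (r.1, r.2.1)
  have hred : P.reduceOption = (L₁ ++ e₁ :: L₂ ++ e₂ :: L₃).map f := by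
    rw [← hF, map_flat_eq_reduceOption]
  have hfe : f e₂ = f e₁ := Prod.ext he.1 he.2
  have he₁ : f e₁ ∈ P.reduceOption := by simp [hred]
  have hcount := (hP _ he₁).1
  intro r hr hname
  have hr' : f r ∈ P.reduceOption := by
    rw [hred]
    refine List.mem_map_of_mem ?_
    simp only [List.mem_append, List.mem_cons] at hr ⊢
    tauto
  have hfr : f r = f e₁ := Prod.ext hname ((hP _ he₁).2 _ hr' hname)
  have hpos : 0 < ((L₁ ++ L₂ ++ L₃).map f).count (f e₁) :=
    List.count_pos_iff.mpr (hfr ▸ List.mem_map_of_mem hr)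
  rw [hred] at hcount
  simp only [List.map_append, List.map_cons, List.count_append, List.count_cons_self,
    hfe] at hcount hpos
  omega

theorem posL_projP_comp_of_isNanoP [DecidableEq α] [Inhabited α] {P : Phrase α}
    (hP : isNanoP P)
    {L₁ L₂ L₃ : List (ℕ × α × ℕ)} {e₁ e₂ : ℕ × α × ℕ}
    (hF : flat P 1 = L₁ ++ e₁ :: L₂ ++ e₂ :: L₃) (he : e₂.1 = e₁.1 ∧ e₂.2.1 = e₁.2.1) :
    posL P e₁.1 = [L₁.length, L₁.length + L₂.length + 1] ∧ projP P e₁.1 = e₁.2.1 ∧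
      comp1 P e₁.1 = e₁.2.2 ∧ comp2 P e₁.1 = e₂.2.2 := by
  have hL : ∀ r ∈ L₁ ++ L₂ ++ L₃, ¬decide (r.1 = e₁.1) := by
    simpa using fst_ne_of_isNanoP hP hF he
  have hfilter : (flat P 1).filter (fun r => r.1 = e₁.1) = [e₁, e₂] := by
    rw [hF]; exact List.filter_eq_pair (by simp) (by simp [he.1]) hL
  refine ⟨?_, ?_, ?_, ?_⟩
  · rw [posL_eq_findIdxs, hF]; exact List.findIdxs_eq_pair (by simp) (by simp [he.1]) hL
  all_goals simp [projP, comp1, comp2, hfilter]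

end Flat

section CRS

variable {α : Type} {τ : α → α} {l m : ℕ} {rep : ℕ → α} {orb : α → ℕ}

theorem IsCRS.orb_apply (hcrs : IsCRS τ l m rep orb) (a : α) : orb (τ a) = orb a :=
  hcrs.2.2.2.2.2 a

theorem IsCRS.eps_apply_eq_neg [DecidableEq α] (hcrs : IsCRS τ l m rep orb) {a : α}
    (ha : τ a ≠ a) : eps rep orb (τ a) = -eps rep orb a := by
  rw [eps, eps, hcrs.orb_apply]
  obtain ⟨hinv, -, hrep, -⟩ := hcrs
  rcases hrep a with h | h
  · rw [if_neg fun h' => ha (h'.trans h.symm), if_pos h]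
  · have h' : τ a = rep (orb a) := (congrArg τ h).trans (hinv _)
    rw [if_pos h', if_neg fun h'' => ha (h'.trans h''.symm), neg_neg]

end CRS

theorem sigmaHat_eq_neg_of_nested {α : Type} [DecidableEq α] [Inhabited α] {rep : ℕ → α}
    {orb : α → ℕ} {P : Phrase α} {nA nB nD c d : ℕ} (j : ℕ)
    (hA : posL P nA = [c, d + 1]) (hB : posL P nB = [c + 1, d])
    (hD : posL P nD ≠ []) (hDA : nD ≠ nA) (hDB : nD ≠ nB)
    (hc₁ : comp1 P nB = comp1 P nA) (hc₂ : comp2 P nB = comp2 P nA)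
    (horb : orb (projP P nB) = orb (projP P nA))
    (heps : eps rep orb (projP P nB) = -eps rep orb (projP P nA)) :
    sigmaHat rep orb P j nD nA = -sigmaHat rep orb P j nD nB := by
  have havoid : ∀ i ∈ posL P nD, i ≠ c ∧ i ≠ d + 1 ∧ i ≠ c + 1 ∧ i ≠ d := fun i hi => by
    have hiA := not_mem_posL_of_ne hDA hi
    have hiB := not_mem_posL_of_ne hDB hi
    simp_all
  have h₁ : pos1 P nD ≠ c ∧ _ := havoid _ (List.headI_mem_of_ne_nil hD)
  have h₂ : pos2 P nD ≠ c ∧ _ := havoid _ (List.getLast!_mem_of_ne_nil hD)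
  have hiff₁ : pos1 P nD < c + 1 ∧ c + 1 < pos2 P nD ∧ pos2 P nD < d ∧ comp2 P nA = j ↔
      pos1 P nD < c ∧ c < pos2 P nD ∧ pos2 P nD < d + 1 ∧ comp2 P nA = j := by
    omega
  have hiff₂ : c + 1 < pos1 P nD ∧ pos1 P nD < d ∧ d < pos2 P nD ∧ comp1 P nA = j ↔
      c < pos1 P nD ∧ pos1 P nD < d + 1 ∧ d + 1 < pos2 P nD ∧ comp1 P nA = j := by
    omega
  have hA₁ : pos1 P nA = c := by rw [pos1, hA]; rfl
  have hA₂ : pos2 P nA = d + 1 := by rw [pos2, hA]; rfl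
  have hB₁ : pos1 P nB = c + 1 := by rw [pos1, hB]; rfl
  have hB₂ : pos2 P nB = d := by rw [pos2, hB]; rfl
  unfold sigmaHat
  rw [hA₁, hA₂, hB₁, hB₂, hc₁, hc₂, horb, heps]
  simp only [hiff₁, hiff₂]
  split_ifs <;> simp [neg_smul]

theorem stmt13_general {α : Type} [DecidableEq α] [Inhabited α] (τ : α → α) (l m : ℕ)
    (rep : ℕ → α) (orb : α → ℕ) (hcrs : IsCRS τ l m rep orb)
    (x y z : Phrase α) (nA nB : ℕ) (a : α)
    (P : Phrase α)
    (hP : P = x ++ [some (nA, a), some (nB, τ a)] ++ y ++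
      [some (nB, τ a), some (nA, a)] ++ z)
    (hnano : isNanoP P) (nD : ℕ) (hD : nD ∈ lettersP P) (hDA : nD ≠ nA)
    (hDB : nD ≠ nB) (hAfree : τ a ≠ a) :
    ∀ j : ℕ,
      kmk l (sigmaHat rep orb P j nD nA) = -kmk l (sigmaHat rep orb P j nD nB) ∧
      kmk l (sigmaHat rep orb P j nD nA) + kmk l (sigmaHat rep orb P j nD nB) = 0 := by
  obtain ⟨i₁, i₂, hF⟩ := flat_nested x y z nA nB a (τ a)
  rw [← hP] at hF
  obtain ⟨hposA, hprojA, hc₁A, hc₂A⟩ := posL_projP_comp_of_isNanoP hnano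
    (L₁ := flat x 1) (e₁ := (nA, a, i₁)) (L₂ := (nB, τ a, i₁) :: flat y i₁ ++ [(nB, τ a, i₂)])
    (e₂ := (nA, a, i₂)) (L₃ := flat z i₂) (by rw [hF]; simp) ⟨rfl, rfl⟩
  obtain ⟨hposB, hprojB, hc₁B, hc₂B⟩ := posL_projP_comp_of_isNanoP hnano
    (L₁ := flat x 1 ++ [(nA, a, i₁)]) (e₁ := (nB, τ a, i₁)) (L₂ := flat y i₁)
    (e₂ := (nB, τ a, i₂)) (L₃ := (nA, a, i₂) :: flat z i₂) (by rw [hF]; simp) ⟨rfl, rfl⟩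
  dsimp only at hposA hprojA hc₁A hc₂A hposB hprojB hc₁B hc₂B
  have key : ∀ j, sigmaHat rep orb P j nD nA = -sigmaHat rep orb P j nD nB := fun j =>
    sigmaHat_eq_neg_of_nested (c := (flat x 1).length)
      (d := (flat x 1).length + (flat y i₁).length + 2) j
      (hposA.trans (by grind)) (hposB.trans (by grind))
      (posL_ne_nil_of_mem_lettersP hD) hDA hDB (hc₁B.trans hc₁A.symm) (hc₂B.trans hc₂A.symm)
      (by rw [hprojA, hprojB, hcrs.orb_apply])
      (by rw [hprojA, hprojB, hcrs.eps_apply_eq_neg hAfree])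
  intro j
  have hneg : kmk l (sigmaHat rep orb P j nD nA) = -kmk l (sigmaHat rep orb P j nD nB) := by
    rw [key]; exact QuotientAddGroup.mk_neg _ _
  exact ⟨hneg, by rw [hneg, neg_add_cancel]⟩

/-- for a nanophrase `P = xAByBAz` with `|B| = τ(|A|)` and any
letter `D ∉ {A,B}` with free `τ`-orbit, if the orbit of `|A|` is also free, then
`σ_P^j(D,A) = −σ_P^j(D,B)`, hence `σ_P^j(D,A) + σ_P^j(D,B) = 0`. -/
theorem stmt13 {α : Type} [DecidableEq α] [Inhabited α] (τ : α → α) (l m : ℕ)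
    (rep : ℕ → α) (orb : α → ℕ) (hcrs : IsCRS τ l m rep orb)
    (x y z : Phrase α) (nA nB : ℕ) (a : α)
    (P : Phrase α)
    (hP : P = x ++ [some (nA, a), some (nB, τ a)] ++ y ++
      [some (nB, τ a), some (nA, a)] ++ z)
    (hnano : isNanoP P) (nD : ℕ) (hD : nD ∈ lettersP P) (hDA : nD ≠ nA)
    (hDB : nD ≠ nB) (hDfree : τ (projP P nD) ≠ projP P nD) (hAfree : τ a ≠ a) :
    ∀ j : ℕ,
      kmk l (sigmaHat rep orb P j nD nA) = -kmk l (sigmaHat rep orb P j nD nB) ∧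
      kmk l (sigmaHat rep orb P j nD nA) + kmk l (sigmaHat rep orb P j nD nB) = 0 :=
  stmt13_general τ l m rep orb hcrs x y z nA nB a P hP hnano nD hD hDA hDB hAfree
end

section
/- The invariant S_o is at least as strong as the invariant T: for any nanophrase P over α and any j, the value T_P(w_j) can be recovered from (B_P)_j; explicitly, T_P(w_j) = Σ_{A ∈ 𝒜_j} ε(A) Σ_{X ∈ 𝒜} σ_P(A,X), which equals the sum over all v of (B_P)_j(v)·(sum of all entries of v). -/
/-! `T_P(w_j)` only depends on the values `l_P(A)`, `A ∈ 𝒜_j`: summing `σ_P(A,X)` over all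
`X` and all components gives the sum of the entries of `l_P(A)`, and grouping the letters of
`𝒜_j` by the value of `l_P` collects their signs `ε(A)` into the coefficients `(B_P)_j(v)`. -/

theorem List.sum_map_finset_sum {ι β M : Type*} [AddCommMonoid M] (L : List β) (s : Finset ι)
    (g : ι → β → M) :
    (L.map fun x => ∑ i ∈ s, g i x).sum = ∑ i ∈ s, (L.map (g i)).sum := by
  induction L with
  | nil => simp
  | cons a L ih => simp [ih, Finset.sum_add_distrib]

theorem List.Nodup.sum_map_eq_sum_dedup_fiberwise {β γ M : Type*} [DecidableEq γ]
    [AddCommMonoid M] {L : List β} (hL : L.Nodup) (f : β → γ) (G : β → M) :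
    (L.map G).sum =
      (((L.map f).dedup).map fun v => ((L.filter fun a => f a = v).map G).sum).sum := by
  classical
  have hvalues : ((L.map f).dedup).toFinset = L.toFinset.image f := by ext; simp
  rw [← List.sum_toFinset _ hL, ← List.sum_toFinset _ (L.map f).nodup_dedup, hvalues,
    ← Finset.sum_fiberwise_of_maps_to (fun a ha => Finset.mem_image_of_mem f ha) G]
  refine Finset.sum_congr rfl fun v _ => ?_
  rw [← List.sum_toFinset _ (hL.filter _), List.toFinset_filter]
  exact Finset.sum_congr (Finset.filter_congr fun a _ => by simp) fun _ _ => rfl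

theorem List.Nodup.sum_map_zsmul_comp_eq_sum_dedup {β γ M : Type*} [DecidableEq γ]
    [AddCommGroup M] {L : List β} (hL : L.Nodup) (f : β → γ) (c : β → ℤ) (F : γ → M) :
    (L.map fun a => c a • F (f a)).sum =
      (((L.map f).dedup).map fun v => ((L.filter fun a => f a = v).map c).sum • F v).sum := by
  rw [hL.sum_map_eq_sum_dedup_fiberwise f]
  refine congrArg List.sum (List.map_congr_left fun v _ => ?_)
  rw [List.sum_smul, List.map_map]
  refine congrArg List.sum (List.map_congr_left fun a ha => ?_)
  rw [Function.comp_apply, of_decide_eq_true (List.mem_filter.1 ha).2]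

theorem kmk_sum_sigmaHat_eq_sum_lP {α : Type} [DecidableEq α] [Inhabited α] (l : ℕ)
    (rep : ℕ → α) (orb : α → ℕ) (P : Phrase α) (nA : ℕ) (s : Finset ℕ) :
    kmk l ((lettersP P).map fun nX => ∑ j ∈ s, sigmaHat rep orb P j nA nX).sum =
      ∑ j ∈ s, lP l rep orb P nA j := by
  rw [List.sum_map_finset_sum]
  exact map_sum (QuotientAddGroup.mk' (Ksub l)) _ s

open Classical in
theorem stmt17_general {α : Type} [DecidableEq α] [Inhabited α] (l : ℕ)
    (rep : ℕ → α) (orb : α → ℕ) (P : Phrase α) (k : ℕ) (j : ℕ) :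
    (((compLetters P j).map fun nA =>
        eps rep orb (projP P nA) •
          kmk l (((lettersP P).map fun nX =>
            ∑ j' ∈ Finset.Icc 1 k, sigmaHat rep orb P j' nA nX).sum)).sum : KG l) =
    ((((compLetters P j).map (lP l rep orb P)).dedup).map fun v =>
        ((((compLetters P j).filter fun nA => lP l rep orb P nA = v).map fun nA =>
          eps rep orb (projP P nA)).sum) • (∑ j' ∈ Finset.Icc 1 k, v j')).sum := by
  simp only [kmk_sum_sigmaHat_eq_sum_lP]
  exact (List.nodup_dedup _).sum_map_zsmul_comp_eq_sum_dedup (lP l rep orb P)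
    (fun nA => eps rep orb (projP P nA)) fun v => ∑ j' ∈ Finset.Icc 1 k, v j'

open Classical in
/-- `S_o` is at least as strong as `T`: for a nanophrase `P` of
length `k` and any `j`, the value
`T_P(w_j) = Σ_{A ∈ 𝒜_j} ε(A)·Σ_{X ∈ 𝒜} σ_P(A,X)` (with
`σ_P(A,X) = Σ_{j'} σ_P^{j'}(A,X)`) can be recovered from `(B_P)_j`: it equals
the sum over the values `v` of `l_P` on `𝒜_j` of
`(Σ_{A ∈ 𝒜_j, l_P(A)=v} ε(A))·(sum of all entries of v)`. -/
theorem stmt17 {α : Type} [DecidableEq α] [Inhabited α] (τ : α → α) (l m : ℕ)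
    (rep : ℕ → α) (orb : α → ℕ) (hcrs : IsCRS τ l m rep orb)
    (P : Phrase α) (k : ℕ) (hnano : isNanoP P) (hk : compCount P = k) (j : ℕ) :
    (((compLetters P j).map fun nA =>
        eps rep orb (projP P nA) •
          kmk l (((lettersP P).map fun nX =>
            ∑ j' ∈ Finset.Icc 1 k, sigmaHat rep orb P j' nA nX).sum)).sum : KG l) =
    ((((compLetters P j).map (lP l rep orb P)).dedup).map fun v =>
        ((((compLetters P j).filter fun nA => lP l rep orb P nA = v).map fun nA =>
          eps rep orb (projP P nA)).sum) • (∑ j' ∈ Finset.Icc 1 k, v j')).sum :=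
  stmt17_general l rep orb P k j
end
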